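/- Let G = (V,E) be a finite acyclic network in which every local measure satisfies μ_i(∅) > 0, let t > 0, and let x(t) be the unique solution of the cavity equation x = tΓ_G(x). Then the energy satisfies U(G;t) = (1/2) Σ_{i∈V} U_{μ_i}(x_{j→i}(t) : j ∈ ∂i) = Σ_{ij∈E} x_{j→i}(t)·x_{i→j}(t) / (t + x_{j→i}(t)·x_{i→j}(t)). -/

import Mathlib

open Finset Filter
open scoped Classical ENNReal

section LocalDefs

variable {V : Type*} [DecidableEq V]

/-- Generating polynomial `Z(w) = Σ_{S ⊆ A} ν(S) ∏_{k∈S} w_k` of a measure `ν`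
on the subsets of the ground set `A`. -/
noncomputable def lZ (A : Finset V) (ν : Finset V → ℝ) (w : V → ℝ) : ℝ :=
  ∑ S ∈ A.powerset, ν S * ∏ k ∈ S, w k

/-- Gibbs--Boltzmann probability of the event `p` under external field `w`. -/
noncomputable def lProb (A : Finset V) (ν : Finset V → ℝ) (w : V → ℝ)
    (p : Finset V → Prop) : ℝ :=
  (∑ S ∈ A.powerset.filter p, ν S * ∏ k ∈ S, w k) / lZ A ν w

/-- The energy `U_ν(w)`, i.e. the expected cardinality of the random subset. -/
noncomputable def lEnergy (A : Finset V) (ν : Finset V → ℝ) (w : V → ℝ) : ℝ :=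
  (∑ S ∈ A.powerset, (S.card : ℝ) * ν S * ∏ k ∈ S, w k) / lZ A ν w

/-- `E^w_ν[|𝓕|·1_{e∈𝓕}]`. -/
noncomputable def lEnergyIn (A : Finset V) (ν : Finset V → ℝ) (e : V) (w : V → ℝ) : ℝ :=
  (∑ S ∈ A.powerset.filter (fun S => e ∈ S), (S.card : ℝ) * ν S * ∏ k ∈ S, w k) / lZ A ν w

/-- The cavity ratio `Γ^e_ν(w') = Z^{/e}(w') / Z^{∖e}(w')`; it only depends on the
coordinates of `w` different from `e`. -/
noncomputable def lGamma (A : Finset V) (ν : Finset V → ℝ) (e : V) (w : V → ℝ) : ℝ :=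
  (∑ S ∈ (A.erase e).powerset, ν (insert e S) * ∏ k ∈ S, w k) /
  (∑ S ∈ (A.erase e).powerset, ν S * ∏ k ∈ S, w k)

/-- Rayleigh property: pairwise negative correlation under every positive external field. -/
def lRayleigh (A : Finset V) (ν : Finset V → ℝ) : Prop :=
  ∀ w : V → ℝ, (∀ k ∈ A, 0 < w k) → ∀ e ∈ A, ∀ f ∈ A, e ≠ f →
    lProb A ν w (fun S => e ∈ S ∧ f ∈ S) ≤
      lProb A ν w (fun S => e ∈ S) * lProb A ν w (fun S => f ∈ S)

/-- Size-increasing property: every ground element positively influences the total size. -/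
def lSizeInc (A : Finset V) (ν : Finset V → ℝ) : Prop :=
  ∀ w : V → ℝ, (∀ k ∈ A, 0 < w k) → ∀ e ∈ A,
    lEnergy A ν w * lProb A ν w (fun S => e ∈ S) < lEnergyIn A ν e w

/-- Cavity-monotone: nonnegative, `ν(∅) > 0`, Rayleigh and size-increasing. -/
def lCavityMonotone (A : Finset V) (ν : Finset V → ℝ) : Prop :=
  (∀ S ∈ A.powerset, 0 ≤ ν S) ∧ 0 < ν ∅ ∧ lRayleigh A ν ∧ lSizeInc A ν

end LocalDefs

section NetworkDefs

variable {V : Type*} [DecidableEq V]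

/-- The cavity operator: `(Γ_G x)_{i→j}` is the cavity ratio of the local measure `μ i`
at the edge `ij`, with external field `(x_{k→i} : k ∈ ∂i ∖ {j})`.  Local measures are
encoded as functions of the set of neighbours selected. -/
noncomputable def cavOp (G : SimpleGraph V) [G.LocallyFinite]
    (μ : V → Finset V → ℝ) (x : V → V → ℝ) (i j : V) : ℝ :=
  (∑ S ∈ ((G.neighborFinset i).erase j).powerset, μ i (insert j S) * ∏ k ∈ S, x k i) /
  (∑ S ∈ ((G.neighborFinset i).erase j).powerset, μ i S * ∏ k ∈ S, x k i)

/-- One step of the cavity iteration at activity `t` : `x ↦ t Γ_G(x)`. -/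
noncomputable def cavStep (G : SimpleGraph V) [G.LocallyFinite]
    (μ : V → Finset V → ℝ) (t : ℝ) (x : V → V → ℝ) : V → V → ℝ :=
  fun i j => t * cavOp G μ x i j

/-- The neighbours `k` of `i` such that the edge `ik` belongs to the spanning subgraph `F`;
this encodes `F ∩ E_i` as a set of neighbours. -/
noncomputable def nbrsIn (G : SimpleGraph V) [G.LocallyFinite]
    (F : Finset (Sym2 V)) (i : V) : Finset V :=
  (G.neighborFinset i).filter (fun k => s(i, k) ∈ F)

variable [Fintype V]

/-- Global measure `μ(F) = ∏_i μ_i(F ∩ E_i)` of a spanning subgraph `F`. -/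
noncomputable def gWeight (G : SimpleGraph V) [DecidableRel G.Adj]
    (μ : V → Finset V → ℝ) (F : Finset (Sym2 V)) : ℝ :=
  ∏ i : V, μ i (nbrsIn G F i)

/-- Partition function `Z(G;t) = Σ_{F ⊆ E} μ(F) t^{|F|}`. -/
noncomputable def ZG (G : SimpleGraph V) [DecidableRel G.Adj]
    (μ : V → Finset V → ℝ) (t : ℝ) : ℝ :=
  ∑ F ∈ G.edgeFinset.powerset, gWeight G μ F * t ^ F.card

/-- Gibbs--Boltzmann probability of the event `p` at activity `t`. -/
noncomputable def gProb (G : SimpleGraph V) [DecidableRel G.Adj]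
    (μ : V → Finset V → ℝ) (t : ℝ) (p : Finset (Sym2 V) → Prop) : ℝ :=
  (∑ F ∈ G.edgeFinset.powerset.filter p, gWeight G μ F * t ^ F.card) / ZG G μ t

/-- Energy `U(G;t)`, the expected size of the random spanning subgraph. -/
noncomputable def UG (G : SimpleGraph V) [DecidableRel G.Adj]
    (μ : V → Finset V → ℝ) (t : ℝ) : ℝ :=
  (∑ F ∈ G.edgeFinset.powerset, (F.card : ℝ) * gWeight G μ F * t ^ F.card) / ZG G μ t

/-- `M(G)`, the maximum size of a spanning subgraph with positive weight. -/
noncomputable def MG (G : SimpleGraph V) [DecidableRel G.Adj]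
    (μ : V → Finset V → ℝ) : ℕ :=
  (G.edgeFinset.powerset.filter (fun F => 0 < gWeight G μ F)).sup Finset.card

end NetworkDefs

/-!
For a vertex `r` and `S ⊆ ∂r`, let `cavityWeight G μ t r S` be the total weight of the spanning
subgraphs `F` with `F ∩ E_r = {rk : k ∈ S}`, the local factor `μ_r` left out. On a forest it
factorizes as `(∏_{k ∈ S} x_{k→r}) · cavityWeight G μ t r ∅`. This is proved by pruning a leaf
`i` with neighbour `j`: the cavity equation at the leaf, `t μ_i({j}) = x_{i→j} μ_i(∅)`, merges the
weights of `F` and `F ∪ {ij}` into the weight of `F` in the forest without `ij`, where `μ_j` is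
replaced by `S ↦ μ_j(S) + x_{i→j} μ_j(S ∪ {i})`; this smaller network solves the same cavity
equations, so induction applies.

Hence `F ∩ E_r` is distributed as the local measure `μ_r` in the field `x_{·→r}`: the expected
degree of `r` is `U_{μ_r}(x_{·→r})`, and summing over `r` counts every edge twice. Inside `μ_r`
the edge `rj` has probability `x_{j→r} Γ / (1 + x_{j→r} Γ)`, where `Γ = x_{r→j} / t` by the
cavity equation.
-/

open SimpleGraph

section LocalMeasure

variable {V : Type*} {A : Finset V} {ν : Finset V → ℝ} {w : V → ℝ}

theorem lZ_pos (hν : ∀ S ∈ A.powerset, 0 ≤ ν S) (hν0 : 0 < ν ∅) (hw : ∀ k, 0 ≤ w k) :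
    0 < lZ A ν w :=
  sum_pos' (fun S hS => mul_nonneg (hν S hS) (prod_nonneg fun k _ => hw k))
    ⟨∅, empty_mem_powerset A, by simpa using hν0⟩

theorem lEnergy_eq_sum_lProb : lEnergy A ν w = ∑ e ∈ A, lProb A ν w (e ∈ ·) := by
  simp only [lEnergy, lProb, ← sum_div]
  congr 1
  rw [sum_comm' (t' := A.powerset) (s' := id) fun e S => ?_]
  · simp [mul_assoc]
  · simp only [mem_filter, mem_powerset, id]
    exact ⟨fun h => ⟨h.2.2, h.2.1⟩, fun h => ⟨h.2 h.1, h.2, h.1⟩⟩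

variable [DecidableEq V] {a e : V}

theorem sum_powerset_insert_mul_prod (ha : a ∉ A) (g : Finset V → ℝ) :
    ∑ S ∈ (insert a A).powerset, g S * ∏ k ∈ S, w k =
      ∑ S ∈ A.powerset, (g S + w a * g (insert a S)) * ∏ k ∈ S, w k := by
  rw [sum_powerset_insert ha, ← sum_add_distrib]
  refine sum_congr rfl fun S hS => ?_
  rw [prod_insert fun h => ha (mem_powerset.1 hS h)]
  ring

def sumOut (ν : Finset V → ℝ) (a : V) (c : ℝ) : Finset V → ℝ :=
  fun S => ν S + c * ν (insert a S)

theorem lGamma_insert (ha : a ∉ A) (hae : a ≠ e) :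
    lGamma (insert a A) ν e w = lGamma A (sumOut ν a (w a)) e w := by
  have ha' : a ∉ A.erase e := fun h => ha (mem_of_mem_erase h)
  rw [lGamma, lGamma, erase_insert_of_ne hae, sum_powerset_insert_mul_prod ha',
    sum_powerset_insert_mul_prod ha']
  congr 1
  exact sum_congr rfl fun S _ => by rw [sumOut, insert_comm]

theorem lProb_mem_eq (he : e ∈ A) (hD : lZ (A.erase e) ν w ≠ 0) :
    lProb A ν w (e ∈ ·) = w e * lGamma A ν e w / (1 + w e * lGamma A ν e w) := by
  set N := ∑ S ∈ (A.erase e).powerset, ν (insert e S) * ∏ k ∈ S, w k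
  have hA : A = insert e (A.erase e) := (insert_erase he).symm
  have he' : ∀ S ∈ (A.erase e).powerset, e ∉ S := fun S hS h =>
    notMem_erase e A (mem_powerset.1 hS h)
  have hnum : ∑ S ∈ A.powerset with e ∈ S, ν S * ∏ k ∈ S, w k = w e * N := by
    rw [sum_filter, hA, sum_powerset_insert (notMem_erase e A), mul_sum,
      sum_eq_zero fun S hS => if_neg (he' S hS), zero_add]
    refine sum_congr rfl fun S hS => ?_
    rw [if_pos (mem_insert_self e S), prod_insert (he' S hS)]
    ring
  have hZ : lZ A ν w = lZ (A.erase e) ν w + w e * N := by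
    conv_lhs => rw [lZ, hA, sum_powerset_insert_mul_prod (notMem_erase e A)]
    rw [lZ, mul_sum, ← sum_add_distrib]
    exact sum_congr rfl fun S _ => by ring
  have hΓ : lGamma A ν e w = N / lZ (A.erase e) ν w := rfl
  rw [hΓ, lProb]
  convert_to w e * N / (lZ (A.erase e) ν w + w e * N) = _
  · rw [hZ, ← hnum]
    -- the two filters differ only in their `Decidable` instances (`lProb` uses the classical one)
    congr!
  field_simp

end LocalMeasure

section Handshake

variable {V : Type*} [Fintype V] [DecidableEq V] (G : SimpleGraph V) [DecidableRel G.Adj]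

theorem sum_sum_neighborFinset_eq_two_nsmul {M : Type*} [AddCommMonoid M] (f : Sym2 V → M) :
    ∑ v, ∑ w ∈ G.neighborFinset v, f s(v, w) = 2 • ∑ e ∈ G.edgeFinset, f e := by
  have hstar : ∀ v, ∑ w ∈ G.neighborFinset v, f s(v, w) = ∑ e ∈ G.edgeFinset with v ∈ e, f e := by
    intro v
    refine sum_bij (fun w _ => s(v, w)) (fun w hw => ?_)
      (fun w _ w' _ h => Sym2.congr_right.1 h) (fun e he => ?_) (fun _ _ => rfl)
    · simpa using hw
    · obtain ⟨he, hv⟩ := mem_filter.1 he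
      refine ⟨Sym2.Mem.other hv, ?_, Sym2.other_spec hv⟩
      rw [mem_neighborFinset, ← SimpleGraph.mem_edgeSet, Sym2.other_spec hv]
      exact mem_edgeFinset.1 he
  rw [sum_congr rfl fun v _ => hstar v, sum_comm' (t' := G.edgeFinset) (s' := Sym2.toFinset)
    fun v e => by simp [Sym2.mem_toFinset, and_comm], smul_sum]
  refine sum_congr rfl fun e he => ?_
  rw [sum_const, Sym2.card_toFinset_of_not_isDiag e
    (G.not_isDiag_of_mem_edgeSet (mem_edgeFinset.1 he))]

end Handshake

section Traces

variable {V : Type*} [DecidableEq V] {G : SimpleGraph V} {F : Finset (Sym2 V)} {a b v : V}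

theorem mem_nbrsIn [G.LocallyFinite] {k : V} : k ∈ nbrsIn G F v ↔ G.Adj v k ∧ s(v, k) ∈ F := by
  simp [nbrsIn]

variable [Fintype V] [DecidableRel G.Adj]

theorem nbrsIn_insert_of_ne (ha : v ≠ a) (hb : v ≠ b) :
    nbrsIn G (insert s(a, b) F) v = nbrsIn G F v := by
  ext k
  simp only [mem_nbrsIn, mem_insert, Sym2.eq_iff]
  tauto

theorem nbrsIn_insert_left (h : G.Adj a b) :
    nbrsIn G (insert s(a, b) F) a = insert b (nbrsIn G F a) := by
  ext k
  simp only [mem_nbrsIn, mem_insert, Sym2.eq_iff]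
  grind

theorem nbrsIn_insert_right (h : G.Adj a b) :
    nbrsIn G (insert s(a, b) F) b = insert a (nbrsIn G F b) := by
  rw [Sym2.eq_swap, nbrsIn_insert_left h.symm]

theorem nbrsIn_deleteEdges_of_notMem {e : Sym2 V} (hF : e ∉ F) :
    nbrsIn (G.deleteEdges {e}) F v = nbrsIn G F v := by
  ext k
  simp only [mem_nbrsIn, deleteEdges_adj, Set.mem_singleton_iff]
  exact ⟨fun h => ⟨h.1.1, h.2⟩, fun h => ⟨⟨h.1, fun he => hF (he ▸ h.2)⟩, h.2⟩⟩

theorem neighborFinset_deleteEdges_subset (e : Sym2 V) :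
    (G.deleteEdges {e}).neighborFinset v ⊆ G.neighborFinset v := fun k hk => by
  simp only [mem_neighborFinset, deleteEdges_adj] at hk ⊢
  exact hk.1

theorem neighborFinset_deleteEdges_of_ne (ha : v ≠ a) (hb : v ≠ b) :
    (G.deleteEdges {s(a, b)}).neighborFinset v = G.neighborFinset v := by
  ext k
  simp only [mem_neighborFinset, deleteEdges_adj, Set.mem_singleton_iff, Sym2.eq_iff]
  tauto

theorem neighborFinset_deleteEdges_left :
    (G.deleteEdges {s(a, b)}).neighborFinset a = (G.neighborFinset a).erase b := by
  ext k
  simp only [mem_neighborFinset, deleteEdges_adj, Set.mem_singleton_iff, Sym2.eq_iff, mem_erase]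
  grind

theorem neighborFinset_deleteEdges_right :
    (G.deleteEdges {s(a, b)}).neighborFinset b = (G.neighborFinset b).erase a := by
  rw [Sym2.eq_swap, neighborFinset_deleteEdges_left]

theorem edgeFinset_eq_insert_deleteEdges (h : G.Adj a b) :
    G.edgeFinset = insert s(a, b) (G.deleteEdges {s(a, b)}).edgeFinset := by
  ext e
  simp only [mem_insert, mem_edgeFinset, edgeSet_deleteEdges, Set.mem_sdiff,
    Set.mem_singleton_iff]
  by_cases he : e = s(a, b)
  · simpa [he] using h
  · simp [he]

theorem notMem_of_mem_powerset_edgeFinset_deleteEdges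
    (hF : F ∈ (G.deleteEdges {s(a, b)}).edgeFinset.powerset) : s(a, b) ∉ F := fun h => by
  simpa using mem_powerset.1 hF h

theorem sum_powerset_edgeFinset_eq_sum_deleteEdges (h : G.Adj a b) (φ : Finset (Sym2 V) → ℝ) :
    ∑ F ∈ G.edgeFinset.powerset, φ F =
      ∑ F ∈ (G.deleteEdges {s(a, b)}).edgeFinset.powerset, (φ F + φ (insert s(a, b) F)) := by
  rw [edgeFinset_eq_insert_deleteEdges h, sum_powerset_insert (by simp), sum_add_distrib]

end Traces

section CavityWeight

variable {V : Type*} [Fintype V] [DecidableEq V]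

noncomputable def cavityWeight (G : SimpleGraph V) [DecidableRel G.Adj]
    (μ : V → Finset V → ℝ) (t : ℝ) (r : V) (S : Finset V) : ℝ :=
  ∑ F ∈ G.edgeFinset.powerset with nbrsIn G F r = S,
    (∏ v ∈ univ.erase r, μ v (nbrsIn G F v)) * t ^ #F

def CavityFactorization (G : SimpleGraph V) [DecidableRel G.Adj] (μ : V → Finset V → ℝ) (t : ℝ)
    (x : V → V → ℝ) : Prop :=
  ∀ r, ∀ S ⊆ G.neighborFinset r,
    cavityWeight G μ t r S = (∏ k ∈ S, x k r) * cavityWeight G μ t r ∅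

variable {G : SimpleGraph V} [DecidableRel G.Adj] {μ : V → Finset V → ℝ} {t : ℝ}

omit [Fintype V] in
theorem prod_update_apply_of_notMem {r : V} {s : Finset V} (hr : r ∉ s) (ρ : Finset V → ℝ)
    (g : V → Finset V) : ∏ v ∈ s, Function.update μ r ρ v (g v) = ∏ v ∈ s, μ v (g v) :=
  prod_congr rfl fun v hv => by rw [Function.update_of_ne (ne_of_mem_of_not_mem hv hr)]

theorem cavityWeight_update_self (r : V) (ρ : Finset V → ℝ) (S : Finset V) :
    cavityWeight G (Function.update μ r ρ) t r S = cavityWeight G μ t r S := by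
  refine sum_congr rfl fun F _ => ?_
  rw [prod_update_apply_of_notMem (notMem_erase r univ)]

theorem sum_mul_cavityWeight (r : V) (g : Finset V → ℝ) :
    ∑ S ∈ (G.neighborFinset r).powerset, g S * cavityWeight G μ t r S =
      ∑ F ∈ G.edgeFinset.powerset,
        g (nbrsIn G F r) * ((∏ v ∈ univ.erase r, μ v (nbrsIn G F v)) * t ^ #F) := by
  rw [← sum_fiberwise_of_maps_to (g := fun F => nbrsIn G F r)
    fun F _ => mem_powerset.2 (filter_subset _ _)]
  refine sum_congr rfl fun S _ => ?_
  rw [cavityWeight, mul_sum]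
  exact sum_congr rfl fun F hF => by rw [(mem_filter.1 hF).2]

end CavityWeight

section Leaf

variable {V : Type*} [Fintype V] [DecidableEq V] {G : SimpleGraph V} [DecidableRel G.Adj]
  {μ : V → Finset V → ℝ} {t c : ℝ} {x : V → V → ℝ} {F : Finset (Sym2 V)} {i j : V}

omit [DecidableEq V] in
theorem adj_of_neighborFinset_eq_singleton (hleaf : G.neighborFinset i = {j}) : G.Adj i j := by
  rw [← mem_neighborFinset, hleaf]
  exact mem_singleton_self j

theorem nbrsIn_leaf_eq_empty (hleaf : G.neighborFinset i = {j}) (hF : s(i, j) ∉ F) :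
    nbrsIn G F i = ∅ := by
  ext k
  simp only [mem_nbrsIn, notMem_empty, iff_false, not_and]
  intro hk hkF
  obtain rfl : k = j := mem_singleton.1 (hleaf ▸ (G.mem_neighborFinset i k).2 hk)
  exact hF hkF

theorem nbrsIn_insert_leaf_eq_singleton (hleaf : G.neighborFinset i = {j}) (hF : s(i, j) ∉ F) :
    nbrsIn G (insert s(i, j) F) i = {j} := by
  rw [nbrsIn_insert_left (adj_of_neighborFinset_eq_singleton hleaf), nbrsIn_leaf_eq_empty hleaf hF]
  rfl

theorem prod_nbrsIn_insert_of_notMem {s : Finset V} (hi : i ∉ s) (hj : j ∉ s) :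
    ∏ v ∈ s, μ v (nbrsIn G (insert s(i, j) F) v) = ∏ v ∈ s, μ v (nbrsIn G F v) :=
  prod_congr rfl fun v hv =>
    by rw [nbrsIn_insert_of_ne (ne_of_mem_of_not_mem hv hi) (ne_of_mem_of_not_mem hv hj)]

omit [Fintype V] in
theorem prod_eq_mul_mul_prod_erase_erase {M : Type*} [CommMonoid M] {s : Finset V} (f : V → M)
    (hi : i ∈ s) (hj : j ∈ s) (hij : i ≠ j) :
    ∏ v ∈ s, f v = f i * f j * ∏ v ∈ (s.erase i).erase j, f v := by
  rw [← mul_prod_erase s f hi, ← mul_prod_erase (s.erase i) f (mem_erase.2 ⟨hij.symm, hj⟩),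
    mul_assoc]

theorem cavityWeight_eq_deleteEdges_of_ne (hleaf : G.neighborFinset i = {j})
    (hcav : t * μ i {j} = c * μ i ∅) {r : V} (hri : r ≠ i) (hrj : r ≠ j) (S : Finset V) :
    cavityWeight G μ t r S =
      cavityWeight (G.deleteEdges {s(i, j)}) (Function.update μ j (sumOut (μ j) i c)) t r S := by
  have hij := adj_of_neighborFinset_eq_singleton hleaf
  rw [cavityWeight, cavityWeight, sum_filter, sum_filter,
    sum_powerset_edgeFinset_eq_sum_deleteEdges hij]
  refine sum_congr rfl fun F hF' => ?_
  have hF := notMem_of_mem_powerset_edgeFinset_deleteEdges hF'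
  simp only [nbrsIn_deleteEdges_of_notMem hF, nbrsIn_insert_of_ne hri hrj]
  split_ifs
  swap
  · simp
  have hi : i ∈ univ.erase r := mem_erase.2 ⟨hri.symm, mem_univ i⟩
  have hj : j ∈ univ.erase r := mem_erase.2 ⟨hrj.symm, mem_univ j⟩
  rw [prod_eq_mul_mul_prod_erase_erase _ hi hj hij.ne,
    prod_eq_mul_mul_prod_erase_erase _ hi hj hij.ne,
    prod_eq_mul_mul_prod_erase_erase _ hi hj hij.ne,
    prod_nbrsIn_insert_of_notMem (fun h => notMem_erase i _ (mem_of_mem_erase h))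
      (notMem_erase j _),
    nbrsIn_insert_leaf_eq_singleton hleaf hF, nbrsIn_leaf_eq_empty hleaf hF,
    nbrsIn_insert_right hij, card_insert_of_notMem hF, pow_succ,
    Function.update_of_ne hij.ne, Function.update_self,
    prod_update_apply_of_notMem (notMem_erase j _), sumOut]
  linear_combination μ j (insert i (nbrsIn G F j)) *
    (∏ v ∈ ((univ.erase r).erase i).erase j, μ v (nbrsIn G F v)) * t ^ #F * hcav

theorem cavityWeight_eq_deleteEdges_of_notMem (hleaf : G.neighborFinset i = {j})
    {S : Finset V} (hiS : i ∉ S) :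
    cavityWeight G μ t j S = cavityWeight (G.deleteEdges {s(i, j)}) μ t j S := by
  have hij := adj_of_neighborFinset_eq_singleton hleaf
  rw [cavityWeight, cavityWeight, sum_filter, sum_filter,
    sum_powerset_edgeFinset_eq_sum_deleteEdges hij]
  refine sum_congr rfl fun F hF' => ?_
  have hF := notMem_of_mem_powerset_edgeFinset_deleteEdges hF'
  simp only [nbrsIn_deleteEdges_of_notMem hF, nbrsIn_insert_right hij]
  rw [if_neg (show insert i (nbrsIn G F j) ≠ S by rintro rfl; exact hiS (mem_insert_self i _)),
    add_zero]

theorem cavityWeight_insert_eq_mul_deleteEdges (hleaf : G.neighborFinset i = {j})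
    (hcav : t * μ i {j} = c * μ i ∅) {S : Finset V} (hiS : i ∉ S) :
    cavityWeight G μ t j (insert i S) = c * cavityWeight (G.deleteEdges {s(i, j)}) μ t j S := by
  have hij := adj_of_neighborFinset_eq_singleton hleaf
  rw [cavityWeight, cavityWeight, sum_filter, sum_filter,
    sum_powerset_edgeFinset_eq_sum_deleteEdges hij, mul_sum]
  refine sum_congr rfl fun F hF' => ?_
  have hF := notMem_of_mem_powerset_edgeFinset_deleteEdges hF'
  have hiF : i ∉ nbrsIn G F j := fun h => hF (Sym2.eq_swap ▸ (mem_nbrsIn.1 h).2)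
  simp only [nbrsIn_deleteEdges_of_notMem hF, nbrsIn_insert_right hij]
  rw [if_neg fun h => hiF (by rw [h]; exact mem_insert_self i S), zero_add]
  by_cases hS : nbrsIn G F j = S
  · have hi : i ∈ univ.erase j := mem_erase.2 ⟨hij.ne, mem_univ i⟩
    rw [if_pos (hS ▸ rfl), if_pos hS, ← mul_prod_erase _ _ hi, ← mul_prod_erase _ _ hi,
      nbrsIn_insert_leaf_eq_singleton hleaf hF, nbrsIn_leaf_eq_empty hleaf hF,
      prod_nbrsIn_insert_of_notMem (notMem_erase i _)
        fun h => notMem_erase j _ (mem_of_mem_erase h),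
      card_insert_of_notMem hF, pow_succ]
    linear_combination (∏ v ∈ (univ.erase j).erase i, μ v (nbrsIn G F v)) * t ^ #F * hcav
  · rw [if_neg hS, if_neg fun h => hS (by rw [← erase_insert hiF, h, erase_insert hiS]),
      mul_zero]

theorem mul_cavityWeight_empty_eq_sum_deleteEdges (hleaf : G.neighborFinset i = {j}) :
    μ i ∅ * cavityWeight G μ t i ∅ =
      ∑ T ∈ ((G.deleteEdges {s(i, j)}).neighborFinset j).powerset,
        μ j T * cavityWeight (G.deleteEdges {s(i, j)}) μ t j T := by
  have hij := adj_of_neighborFinset_eq_singleton hleaf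
  rw [sum_mul_cavityWeight, cavityWeight, sum_filter,
    sum_powerset_edgeFinset_eq_sum_deleteEdges hij, mul_sum]
  refine sum_congr rfl fun F hF' => ?_
  have hF := notMem_of_mem_powerset_edgeFinset_deleteEdges hF'
  simp only [nbrsIn_deleteEdges_of_notMem hF, nbrsIn_insert_leaf_eq_singleton hleaf hF,
    nbrsIn_leaf_eq_empty hleaf hF, singleton_ne_empty, if_true, if_false, add_zero]
  have hi := mul_prod_erase univ (fun v => μ v (nbrsIn G F v)) (mem_univ i)
  have hj := mul_prod_erase univ (fun v => μ v (nbrsIn G F v)) (mem_univ j)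
  rw [nbrsIn_leaf_eq_empty hleaf hF] at hi
  linear_combination t ^ #F * (hi - hj)

theorem mul_cavityWeight_singleton_eq_sum_deleteEdges (hleaf : G.neighborFinset i = {j}) :
    μ i ∅ * cavityWeight G μ t i {j} =
      t * ∑ T ∈ ((G.deleteEdges {s(i, j)}).neighborFinset j).powerset,
        μ j (insert i T) * cavityWeight (G.deleteEdges {s(i, j)}) μ t j T := by
  have hij := adj_of_neighborFinset_eq_singleton hleaf
  rw [sum_mul_cavityWeight, cavityWeight, sum_filter,
    sum_powerset_edgeFinset_eq_sum_deleteEdges hij, mul_sum, mul_sum]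
  refine sum_congr rfl fun F hF' => ?_
  have hF := notMem_of_mem_powerset_edgeFinset_deleteEdges hF'
  simp only [nbrsIn_deleteEdges_of_notMem hF, nbrsIn_insert_leaf_eq_singleton hleaf hF,
    nbrsIn_leaf_eq_empty hleaf hF, empty_ne_singleton, if_true, if_false, zero_add]
  rw [← mul_prod_erase (univ.erase i) _ (mem_erase.2 ⟨hij.ne.symm, mem_univ j⟩),
    ← mul_prod_erase (univ.erase j) _ (mem_erase.2 ⟨hij.ne, mem_univ i⟩),
    nbrsIn_insert_right hij, nbrsIn_leaf_eq_empty hleaf hF, erase_right_comm,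
    prod_nbrsIn_insert_of_notMem (notMem_erase i _)
      fun h => notMem_erase j _ (mem_of_mem_erase h),
    card_insert_of_notMem hF, pow_succ]
  ring

theorem cavityWeight_singleton_eq_mul_of_leaf (hleaf : G.neighborFinset i = {j})
    (hμi : μ i ∅ ≠ 0)
    (hcav_j : x j i * lZ ((G.neighborFinset j).erase i) (μ j) (fun k => x k j) =
      t * lZ ((G.neighborFinset j).erase i) (fun T => μ j (insert i T)) (fun k => x k j))
    (hj : ∀ T ⊆ (G.neighborFinset j).erase i,
      cavityWeight (G.deleteEdges {s(i, j)}) μ t j T =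
        (∏ k ∈ T, x k j) * cavityWeight (G.deleteEdges {s(i, j)}) μ t j ∅) :
    cavityWeight G μ t i {j} = x j i * cavityWeight G μ t i ∅ := by
  refine mul_left_cancel₀ hμi ?_
  rw [mul_left_comm, mul_cavityWeight_singleton_eq_sum_deleteEdges hleaf,
    mul_cavityWeight_empty_eq_sum_deleteEdges hleaf, neighborFinset_deleteEdges_right]
  have hsum : ∀ g : Finset V → ℝ,
      ∑ T ∈ ((G.neighborFinset j).erase i).powerset,
        g T * cavityWeight (G.deleteEdges {s(i, j)}) μ t j T =
      (∑ T ∈ ((G.neighborFinset j).erase i).powerset, g T * ∏ k ∈ T, x k j) *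
        cavityWeight (G.deleteEdges {s(i, j)}) μ t j ∅ := fun g => by
    rw [sum_mul]
    exact sum_congr rfl fun T hT => by rw [hj T (mem_powerset.1 hT), mul_assoc]
  rw [hsum, hsum, ← lZ, ← lZ]
  linear_combination (-cavityWeight (G.deleteEdges {s(i, j)}) μ t j ∅) * hcav_j

theorem CavityFactorization.of_deleteEdges_leaf (hleaf : G.neighborFinset i = {j})
    (hμi : μ i ∅ ≠ 0) (hcav_i : t * μ i {j} = x i j * μ i ∅)
    (hcav_j : x j i * lZ ((G.neighborFinset j).erase i) (μ j) (fun k => x k j) =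
      t * lZ ((G.neighborFinset j).erase i) (fun T => μ j (insert i T)) (fun k => x k j))
    (h : CavityFactorization (G.deleteEdges {s(i, j)})
      (Function.update μ j (sumOut (μ j) i (x i j))) t x) :
    CavityFactorization G μ t x := by
  have hj : ∀ T ⊆ (G.neighborFinset j).erase i,
      cavityWeight (G.deleteEdges {s(i, j)}) μ t j T =
        (∏ k ∈ T, x k j) * cavityWeight (G.deleteEdges {s(i, j)}) μ t j ∅ := fun T hT => by
    simpa only [cavityWeight_update_self] using
      h j T (neighborFinset_deleteEdges_right (G := G) ▸ hT)
  intro r S hS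
  by_cases hri : r = i
  · subst r
    rcases subset_singleton_iff.1 (hleaf ▸ hS) with rfl | rfl
    · rw [prod_empty, one_mul]
    · rw [prod_singleton, cavityWeight_singleton_eq_mul_of_leaf hleaf hμi hcav_j hj]
  by_cases hrj : r = j
  · subst r
    by_cases hiS : i ∈ S
    · obtain ⟨S₀, hiS₀, rfl⟩ : ∃ S₀, i ∉ S₀ ∧ S = insert i S₀ :=
        ⟨S.erase i, notMem_erase i S, (insert_erase hiS).symm⟩
      rw [cavityWeight_insert_eq_mul_deleteEdges hleaf hcav_i hiS₀,
        hj S₀ (subset_erase.2 ⟨(insert_subset_iff.1 hS).2, hiS₀⟩), prod_insert hiS₀,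
        cavityWeight_eq_deleteEdges_of_notMem hleaf (notMem_empty i), mul_assoc]
    · rw [cavityWeight_eq_deleteEdges_of_notMem hleaf hiS, hj S (subset_erase.2 ⟨hS, hiS⟩),
        cavityWeight_eq_deleteEdges_of_notMem hleaf (notMem_empty i)]
  rw [cavityWeight_eq_deleteEdges_of_ne hleaf hcav_i hri hrj,
    cavityWeight_eq_deleteEdges_of_ne hleaf hcav_i hri hrj]
  exact h r S (by rwa [neighborFinset_deleteEdges_of_ne hri hrj])

theorem cavOp_deleteEdges_leaf (hleaf : G.neighborFinset i = {j}) {a b : V}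
    (hab : (G.deleteEdges {s(i, j)}).Adj a b) :
    cavOp (G.deleteEdges {s(i, j)}) (Function.update μ j (sumOut (μ j) i (x i j))) x a b =
      cavOp G μ x a b := by
  have hij := adj_of_neighborFinset_eq_singleton hleaf
  have hne : s(a, b) ≠ s(i, j) := (deleteEdges_adj.1 hab).2
  change lGamma _ _ b (fun k => x k a) = lGamma _ _ b (fun k => x k a)
  by_cases haj : a = j
  · subst a
    have hib : i ≠ b := by rintro rfl; exact hne Sym2.eq_swap
    rw [neighborFinset_deleteEdges_right, Function.update_self,
      ← lGamma_insert (w := fun k => x k j) (notMem_erase i _) hib,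
      insert_erase ((G.mem_neighborFinset j i).2 hij.symm)]
  · have hai : a ≠ i := by
      rintro rfl
      have hb := (mem_neighborFinset _ _ _).2 hab
      rw [neighborFinset_deleteEdges_left, hleaf, erase_singleton] at hb
      exact notMem_empty b hb
    rw [neighborFinset_deleteEdges_of_ne hai haj, Function.update_of_ne haj]

theorem cavOp_mul_lZ_erase {a b : V}
    (hD : lZ ((G.neighborFinset a).erase b) (μ a) (fun k => x k a) ≠ 0) :
    cavOp G μ x a b * lZ ((G.neighborFinset a).erase b) (μ a) (fun k => x k a) =
      lZ ((G.neighborFinset a).erase b) (fun T => μ a (insert b T)) (fun k => x k a) :=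
  div_mul_cancel₀ _ hD

theorem cavOp_mul_of_leaf (hleaf : G.neighborFinset i = {j}) (hμi : μ i ∅ ≠ 0) :
    cavOp G μ x i j * μ i ∅ = μ i {j} := by
  simp only [cavOp, hleaf, erase_singleton, powerset_empty, sum_singleton, prod_empty, mul_one,
    insert_empty_eq]
  exact div_mul_cancel₀ _ hμi

theorem update_sumOut_nonneg (hiNj : i ∈ G.neighborFinset j)
    (hμ : ∀ v, ∀ S ∈ (G.neighborFinset v).powerset, 0 ≤ μ v S) (hc : 0 ≤ c) (v : V) :
    ∀ S ∈ ((G.deleteEdges {s(i, j)}).neighborFinset v).powerset,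
      0 ≤ Function.update μ j (sumOut (μ j) i c) v S := by
  intro S hS
  have hS' : S ⊆ G.neighborFinset v :=
    (mem_powerset.1 hS).trans (neighborFinset_deleteEdges_subset _)
  by_cases hv : v = j
  · subst v
    rw [Function.update_self]
    exact add_nonneg (hμ _ _ (mem_powerset.2 hS'))
      (mul_nonneg hc (hμ _ _ (mem_powerset.2 (insert_subset hiNj hS'))))
  · rw [Function.update_of_ne hv]
    exact hμ v S (mem_powerset.2 hS')

theorem update_sumOut_empty_pos (hiNj : i ∈ G.neighborFinset j)
    (hμ : ∀ v, ∀ S ∈ (G.neighborFinset v).powerset, 0 ≤ μ v S) (hμ0 : ∀ v, 0 < μ v ∅)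
    (hc : 0 ≤ c) (v : V) : 0 < Function.update μ j (sumOut (μ j) i c) v ∅ := by
  by_cases hv : v = j
  · subst v
    rw [Function.update_self]
    exact add_pos_of_pos_of_nonneg (hμ0 j) (mul_nonneg hc (hμ j _ (by simpa using hiNj)))
  · rw [Function.update_of_ne hv]
    exact hμ0 v

end Leaf

section Forest

variable {V : Type*} [Fintype V]

theorem SimpleGraph.IsAcyclic.exists_neighborFinset_eq_singleton_of_isPath {G : SimpleGraph V}
    [DecidableRel G.Adj] (hG : G.IsAcyclic) {a b : V} {p : G.Walk a b} (hp : p.IsPath)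
    (hnil : ¬p.Nil) : ∃ i j, G.neighborFinset i = {j} := by
  by_cases hext : ∃ w, G.Adj a w ∧ w ∉ p.support
  · obtain ⟨w, haw, hw⟩ := hext
    have : (Walk.cons haw.symm p).length < Fintype.card V := (hp.cons hw).length_lt
    exact hG.exists_neighborFinset_eq_singleton_of_isPath (p := .cons haw.symm p) (hp.cons hw)
      Walk.not_nil_cons
  · push Not at hext
    refine ⟨a, p.snd, Finset.ext fun w => ?_⟩
    rw [mem_neighborFinset, mem_singleton]
    exact ⟨fun haw => hG.eq_snd_of_adj_start hp haw (hext w haw),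
      fun hw => hw ▸ p.adj_snd hnil⟩
termination_by Fintype.card V - p.length
decreasing_by simp only [Walk.length_cons] at this ⊢; omega

theorem SimpleGraph.IsAcyclic.exists_neighborFinset_eq_singleton {G : SimpleGraph V}
    [DecidableRel G.Adj] (hG : G.IsAcyclic) {a b : V} (hab : G.Adj a b) :
    ∃ i j, G.neighborFinset i = {j} :=
  hG.exists_neighborFinset_eq_singleton_of_isPath (Walk.IsPath.of_adj hab) Walk.not_nil_cons

theorem SimpleGraph.IsAcyclic.cavityFactorization [DecidableEq V] {G : SimpleGraph V}
    [DecidableRel G.Adj] {μ : V → Finset V → ℝ} {t : ℝ} {x : V → V → ℝ} (hac : G.IsAcyclic)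
    (hμ : ∀ i, ∀ S ∈ (G.neighborFinset i).powerset, 0 ≤ μ i S) (hμ0 : ∀ i, 0 < μ i ∅)
    (hx0 : ∀ a b, 0 ≤ x a b) (hx : ∀ a b, G.Adj a b → x a b = t * cavOp G μ x a b) :
    CavityFactorization G μ t x := by
  by_cases hE : ∃ a b, G.Adj a b
  swap
  · push Not at hE
    intro r S hS
    obtain rfl : S = ∅ :=
      subset_empty.1 fun k hk => (hE r k ((G.mem_neighborFinset r k).1 (hS hk))).elim
    rw [prod_empty, one_mul]
  obtain ⟨a, b, hab⟩ := hE
  obtain ⟨i, j, hleaf⟩ := hac.exists_neighborFinset_eq_singleton hab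
  have hij := adj_of_neighborFinset_eq_singleton hleaf
  have hiNj : i ∈ G.neighborFinset j := (G.mem_neighborFinset j i).2 hij.symm
  have hcav_i : t * μ i {j} = x i j * μ i ∅ := by
    rw [hx i j hij, mul_assoc, cavOp_mul_of_leaf hleaf (hμ0 i).ne']
  have hA : 0 < lZ ((G.neighborFinset j).erase i) (μ j) (fun k => x k j) :=
    lZ_pos (fun S hS => hμ j S (mem_powerset.2 ((mem_powerset.1 hS).trans (erase_subset i _))))
      (hμ0 j) (fun k => hx0 k j)
  have hcav_j : x j i * lZ ((G.neighborFinset j).erase i) (μ j) (fun k => x k j) =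
      t * lZ ((G.neighborFinset j).erase i) (fun T => μ j (insert i T)) (fun k => x k j) := by
    rw [hx j i hij.symm, mul_assoc, cavOp_mul_lZ_erase hA.ne']
  refine CavityFactorization.of_deleteEdges_leaf hleaf (hμ0 i).ne' hcav_i hcav_j ?_
  refine (hac.anti (deleteEdges_le _)).cavityFactorization (update_sumOut_nonneg hiNj hμ (hx0 i j))
    (update_sumOut_empty_pos hiNj hμ hμ0 (hx0 i j)) hx0 fun a b hab => ?_
  rw [cavOp_deleteEdges_leaf hleaf hab]
  exact hx a b (deleteEdges_adj.1 hab).1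
termination_by #G.edgeFinset
decreasing_by
  rw [edgeFinset_eq_insert_deleteEdges hij, card_insert_of_notMem (by simp)]
  omega

end Forest

section Energy

variable {V : Type*} [Fintype V] [DecidableEq V] {G : SimpleGraph V} [DecidableRel G.Adj]
  {μ : V → Finset V → ℝ} {t : ℝ} {x : V → V → ℝ}

theorem ZG_pos (hμ : ∀ i, ∀ S ∈ (G.neighborFinset i).powerset, 0 ≤ μ i S) (hμ0 : ∀ i, 0 < μ i ∅)
    (ht : 0 ≤ t) : 0 < ZG G μ t := by
  refine sum_pos' (fun F _ => mul_nonneg (prod_nonneg fun v _ => ?_) (pow_nonneg ht _))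
    ⟨∅, empty_mem_powerset _, ?_⟩
  · exact hμ v _ (mem_powerset.2 (filter_subset _ _))
  · simpa [gWeight, nbrsIn] using prod_pos fun i _ => hμ0 i

theorem sum_card_nbrsIn {F : Finset (Sym2 V)} (hF : F ⊆ G.edgeFinset) :
    ∑ r, #(nbrsIn G F r) = 2 * #F := by
  calc ∑ r, #(nbrsIn G F r)
      = ∑ r, ∑ w ∈ G.neighborFinset r, if s(r, w) ∈ F then 1 else 0 := by
        simp only [nbrsIn, card_filter]
    _ = 2 • ∑ e ∈ G.edgeFinset, if e ∈ F then 1 else 0 :=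
        sum_sum_neighborFinset_eq_two_nsmul G fun e => if e ∈ F then 1 else 0
    _ = 2 * #F := by
        rw [← card_filter, filter_mem_eq_inter, inter_eq_right.2 hF, smul_eq_mul]

theorem CavityFactorization.sum_mul_gWeight (h : CavityFactorization G μ t x) (r : V)
    (g : Finset V → ℝ) :
    ∑ F ∈ G.edgeFinset.powerset, g (nbrsIn G F r) * (gWeight G μ F * t ^ #F) =
      (∑ S ∈ (G.neighborFinset r).powerset, g S * μ r S * ∏ k ∈ S, x k r) *
        cavityWeight G μ t r ∅ := by
  calc ∑ F ∈ G.edgeFinset.powerset, g (nbrsIn G F r) * (gWeight G μ F * t ^ #F)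
      = ∑ F ∈ G.edgeFinset.powerset, g (nbrsIn G F r) * μ r (nbrsIn G F r) *
          ((∏ v ∈ univ.erase r, μ v (nbrsIn G F v)) * t ^ #F) :=
        sum_congr rfl fun F _ => by rw [gWeight, ← mul_prod_erase univ _ (mem_univ r)]; ring
    _ = ∑ S ∈ (G.neighborFinset r).powerset, g S * μ r S * cavityWeight G μ t r S :=
        (sum_mul_cavityWeight r fun S => g S * μ r S).symm
    _ = _ := by
        rw [sum_mul]
        exact sum_congr rfl fun S hS => by rw [h r S (mem_powerset.1 hS)]; ring

theorem CavityFactorization.UG_eq_half_sum_lEnergy (h : CavityFactorization G μ t x)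
    (hZ : ZG G μ t ≠ 0) :
    UG G μ t = 1 / 2 * ∑ r, lEnergy (G.neighborFinset r) (μ r) (fun k => x k r) := by
  have hr : ∀ r, lEnergy (G.neighborFinset r) (μ r) (fun k => x k r) =
      (∑ F ∈ G.edgeFinset.powerset, #(nbrsIn G F r) * (gWeight G μ F * t ^ #F)) / ZG G μ t := by
    intro r
    have hZr : ZG G μ t = lZ (G.neighborFinset r) (μ r) (fun k => x k r) *
        cavityWeight G μ t r ∅ := by
      simpa [lZ, ZG] using h.sum_mul_gWeight r fun _ => 1
    rw [h.sum_mul_gWeight r fun S => (#S : ℝ), hZr, lEnergy,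
      mul_div_mul_right _ _ (right_ne_zero_of_mul (hZr ▸ hZ))]
  have hsum : ∑ F ∈ G.edgeFinset.powerset, ∑ r, #(nbrsIn G F r) * (gWeight G μ F * t ^ #F) =
      2 * ∑ F ∈ G.edgeFinset.powerset, #F * gWeight G μ F * t ^ #F := by
    rw [mul_sum]
    refine sum_congr rfl fun F hF => ?_
    rw [← sum_mul, ← Nat.cast_sum, sum_card_nbrsIn (mem_powerset.1 hF)]
    push_cast
    ring
  rw [sum_congr rfl fun r _ => hr r, ← sum_div, sum_comm, hsum, UG]
  ring

theorem lProb_mem_eq_of_cavOp {i j : V} (ht : t ≠ 0)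
    (hx : x i j = t * cavOp G μ x i j) (hj : j ∈ G.neighborFinset i)
    (hD : lZ ((G.neighborFinset i).erase j) (μ i) (fun k => x k i) ≠ 0) :
    lProb (G.neighborFinset i) (μ i) (fun k => x k i) (j ∈ ·) =
      x j i * x i j / (t + x j i * x i j) := by
  have hΓ : lGamma (G.neighborFinset i) (μ i) j (fun k => x k i) = x i j / t := by
    rw [eq_div_iff ht, mul_comm, hx]
    rfl
  rw [lProb_mem_eq hj hD, hΓ]
  field_simp

theorem lEnergy_eq_sum_of_cavOp {i : V} (ht : t ≠ 0)
    (hμ : ∀ S ∈ (G.neighborFinset i).powerset, 0 ≤ μ i S) (hμ0 : 0 < μ i ∅)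
    (hx0 : ∀ k, 0 ≤ x k i) (hx : ∀ j, G.Adj i j → x i j = t * cavOp G μ x i j) :
    lEnergy (G.neighborFinset i) (μ i) (fun j => x j i) =
      ∑ j ∈ G.neighborFinset i, x j i * x i j / (t + x j i * x i j) := by
  rw [lEnergy_eq_sum_lProb]
  refine sum_congr rfl fun j hj => lProb_mem_eq_of_cavOp ht
    (hx j ((G.mem_neighborFinset i j).1 hj)) hj (lZ_pos ?_ hμ0 hx0).ne'
  exact fun S hS => hμ S (mem_powerset.2 ((mem_powerset.1 hS).trans (erase_subset j _)))

end Energy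

/-- on a finite acyclic network, the energy can be computed locally from the
solution of the cavity equation:
`U(G;t) = ½ Σ_i U_{μ_i}(x_{j→i}(t) : j∈∂i) = Σ_{ij∈E} x_{j→i}x_{i→j}/(t + x_{j→i}x_{i→j})`. -/
theorem stmt8 {V : Type*} [Fintype V] [DecidableEq V] (G : SimpleGraph V)
    [DecidableRel G.Adj] (hac : G.IsAcyclic) (μ : V → Finset V → ℝ)
    (hnn : ∀ i : V, ∀ S ∈ (G.neighborFinset i).powerset, 0 ≤ μ i S)
    (h0 : ∀ i : V, 0 < μ i ∅) (t : ℝ) (ht : 0 < t)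
    (x : V → V → ℝ) (hxnn : ∀ i j, 0 ≤ x i j)
    (hx : ∀ i j, G.Adj i j → x i j = t * cavOp G μ x i j) :
    UG G μ t = (1 / 2) * ∑ i : V, lEnergy (G.neighborFinset i) (μ i) (fun j => x j i) ∧
    UG G μ t = ∑ e ∈ G.edgeFinset,
      Sym2.lift ⟨fun i j => x j i * x i j / (t + x j i * x i j), by intros; ring_nf⟩ e := by
  have hU := (hac.cavityFactorization hnn h0 hxnn hx).UG_eq_half_sum_lEnergy
    (ZG_pos hnn h0 ht.le).ne'
  refine ⟨hU, ?_⟩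
  have hedges := sum_sum_neighborFinset_eq_two_nsmul G
    (Sym2.lift ⟨fun i j => x j i * x i j / (t + x j i * x i j), by intros; ring_nf⟩)
  simp only [Sym2.lift_mk, nsmul_eq_mul] at hedges
  rw [hU, sum_congr rfl fun i _ =>
    lEnergy_eq_sum_of_cavOp ht.ne' (hnn i) (h0 i) (fun k => hxnn k i) (hx i), hedges]
  ring
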